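/- arXiv:2103.12332 — 4 statements merged into one kernel-verified Lean document; each statement's English description precedes it below -/
import Mathlib

section
/- Let w be a Lyndon word with standard factorization w = u·v (v the longest proper Lyndon suffix). Then v is also the minimal Lyndon word, in lexicographic order, among all proper Lyndon suffixes of w. -/
/-- A nonempty word over a totally ordered alphabet is a *Lyndon word* if it is strictly
smaller, in the lexicographic order, than every proper cyclic rotation of itself. -/
def IsLyndon {α : Type*} [LinearOrder α] (w : List α) : Prop :=
  w ≠ [] ∧ ∀ u v : List α, u ≠ [] → v ≠ [] → w = u ++ v → w < v ++ u

/-!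
Among the suffixes of `u ++ v`, those no longer than `v` are suffixes of `v`, so maximality of
`v` makes every proper Lyndon suffix `v'` a suffix of `v`. A Lyndon word is strictly smaller than
each of its proper nonempty suffixes, hence `v ≤ v'`.
-/

namespace List

variable {α : Type*} [LinearOrder α]

theorem lt_or_isPrefix_of_lt_append {a b c : List α} (h : a < b ++ c) : a < b ∨ b <+: a := by
  induction b generalizing a with
  | nil => exact .inr nil_prefix
  | cons x b ih =>
    match a, (h : Lex (· < ·) _ (x :: (b ++ c))) with
    | [], _ => exact .inl .nil
    | _ :: _, .rel hyx => exact .inl (.rel hyx)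
    | _ :: _, .cons h' => exact (ih h').imp .cons (cons_prefix_cons.2 ⟨rfl, ·⟩)

theorem append_lt_append_right_of_not_isPrefix {a b : List α} (s : List α) (h : a < b)
    (hab : ¬a <+: b) : a ++ s < b ++ s := by
  induction h with
  | nil => exact absurd nil_prefix hab
  | cons _ ih => exact .cons (ih fun hp => hab (cons_prefix_cons.2 ⟨rfl, hp⟩))
  | rel hxy => exact .rel hxy

theorem lt_of_append_lt_append_left {s t₁ t₂ : List α} (h : s ++ t₁ < s ++ t₂) :
    t₁ < t₂ := by
  by_contra hge
  exact append_left_le (List.not_lt.1 hge) h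

end List

namespace IsLyndon

variable {α : Type*} [LinearOrder α]

theorem lt_of_append {p s : List α} (hw : IsLyndon (p ++ s)) (hp : p ≠ [])
    (hs : s ≠ []) : p ++ s < s := by
  -- Otherwise `p ++ s = s ++ t` with `|t| = |p|`, and the rotations `s ++ p` and `t ++ s`
  -- force `t < p` and `p ++ s < t ++ s < p ++ s`.
  refine (List.lt_or_isPrefix_of_lt_append (hw.2 p s hp hs rfl)).resolve_right ?_
  rintro ⟨t, ht⟩
  have hlen : t.length = p.length := by
    have := congrArg List.length ht
    simp only [List.length_append] at this
    omega
  have ht_ne : t ≠ [] := by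
    rintro rfl
    exact hp (List.length_eq_zero_iff.mp hlen.symm)
  have hrot_p : s ++ t < s ++ p := ht ▸ hw.2 p s hp hs rfl
  have htp : t < p := List.lt_of_append_lt_append_left hrot_p
  have ht_not_prefix : ¬t <+: p := fun hpre => htp.ne (hpre.eq_of_length hlen)
  have hrot_t : p ++ s < t ++ s := ht ▸ hw.2 s t hs ht_ne ht.symm
  exact lt_irrefl _
    (hrot_t.trans (List.append_lt_append_right_of_not_isPrefix s htp ht_not_prefix))

theorem le_of_isSuffix {w s : List α} (hw : IsLyndon w) (hs : s <:+ w) (hne : s ≠ []) :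
    w ≤ s := by
  obtain ⟨p, rfl⟩ := hs
  rcases eq_or_ne p [] with rfl | hp
  · exact le_rfl
  · exact (hw.lt_of_append hp hne).le

end IsLyndon

theorem stdFactorization_right_factor_minimal_general {α : Type*} [LinearOrder α] (u v : List α)
    (hv : IsLyndon v)
    (hmax : ∀ u' v' : List α, u' ≠ [] → u' ++ v' = u ++ v → IsLyndon v' →
      v'.length ≤ v.length) :
    ∀ u' v' : List α, u' ≠ [] → u' ++ v' = u ++ v → IsLyndon v' → v ≤ v' := by
  intro u' v' hu' heq hv'
  have hsuffix : v' <:+ v :=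
    List.suffix_of_suffix_length_le ⟨u', heq⟩ ⟨u, rfl⟩ (hmax u' v' hu' heq hv')
  exact hv.le_of_isSuffix hsuffix hv'.1

/-- Let `w = u ++ v` be the standard factorization of a Lyndon word `w` (so `v` is the
longest proper Lyndon suffix of `w`).  Then `v` is also the minimal Lyndon word, in the
lexicographic order, among all proper Lyndon suffixes of `w`. -/
theorem stdFactorization_right_factor_minimal {α : Type*} [LinearOrder α] (u v : List α)
    (hw : IsLyndon (u ++ v)) (hu : u ≠ []) (hv : IsLyndon v)
    (hmax : ∀ u' v' : List α, u' ≠ [] → u' ++ v' = u ++ v → IsLyndon v' →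
      v'.length ≤ v.length) :
    ∀ u' v' : List α, u' ≠ [] → u' ++ v' = u ++ v → IsLyndon v' → v ≤ v' :=
  stdFactorization_right_factor_minimal_general u v hv hmax
end

section
/- Fix k ∈ Z_+[I] with k_i ≤ 1 for i ∈ I^re ∪ Ψ_0. Then the root space g_{η(k)} of a BKM superalgebra g with quasi Dynkin diagram (G,Ψ) is isomorphic, as a vector space, to the k-graded component LS_k(G,Ψ) of the free partially commutative Lie superalgebra; in particular mult η(k) = dim LS_k(G,Ψ). -/
open scoped Classical
noncomputable section

/-- The weight of a word: the finitely supported function counting the occurrences of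
each letter. -/
def wordWeight {I : Type*} (w : List I) : I →₀ ℕ :=
  (w.map fun i => Finsupp.single i 1).sum

/-- The parity (in `ℤ/2`) of a weight, counting only letters belonging to the odd set
`Ψ`. -/
def wtPar {I : Type*} (Ψ : Set I) (k : I →₀ ℕ) : ZMod 2 :=
  k.sum fun i n => if i ∈ Ψ then (n : ZMod 2) else 0

/-- A Borcherds–Kac–Moody supermatrix `(A, Ψ)`:  a real matrix together with a set `Ψ`
of odd indices satisfying the defining conditions of a BKM supermatrix. -/
structure BKMSupermatrix (I : Type*) where
  a : I → I → ℝ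
  Ψ : Set I
  diag : ∀ i, a i i = 2 ∨ a i i ≤ 0
  offdiag : ∀ i j, i ≠ j → a i j ≤ 0
  zero_iff : ∀ i j, a i j = 0 ↔ a j i = 0
  isInt : ∀ i j, a i i = 2 → ∃ n : ℤ, a i j = (n : ℝ)
  isEvenInt : ∀ i j, a i i = 2 → i ∈ Ψ → ∃ n : ℤ, a i j = 2 * (n : ℝ)
  symmetrizable : ∃ d : I → ℝ, (∀ i, 0 < d i) ∧ ∀ i j, d i * a i j = d j * a j i

namespace BKMSupermatrix

variable {I : Type*} (A : BKMSupermatrix I)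

/-- The set of real simple roots: `I^re = {i | a_{ii} = 2}`. -/
def Ire : Set I := {i | A.a i i = 2}

/-- The set of odd simple roots of zero norm: `Ψ₀ = {i ∈ Ψ | a_{ii} = 0}`. -/
def Psi0 : Set I := {i | i ∈ A.Ψ ∧ A.a i i = 0}

/-- The quasi Dynkin diagram of `(A, Ψ)`: the simple graph on `I` in which two distinct
vertices `i, j` are adjacent iff `a_{ij} ≠ 0`. -/
def quasiDynkin : SimpleGraph I where
  Adj i j := i ≠ j ∧ A.a i j ≠ 0
  symm := by
    constructor
    rintro i j ⟨hne, hz⟩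
    exact ⟨hne.symm, fun h => hz ((A.zero_iff i j).mpr h)⟩
  loopless := by constructor; rintro i ⟨h, _⟩; exact h rfl

end BKMSupermatrix

/-- The free associative superalgebra on generators `e_i`, realized as the monoid algebra
of the free monoid on `I`; the free Lie superalgebra sits inside it via the
super-commutator. -/
abbrev FA (I : Type*) := MonoidAlgebra ℂ (FreeMonoid I)

variable {I : Type*}

/-- The underlying finitely supported coefficient function of an element of `FA I`. -/
def coeffs (x : FA I) : FreeMonoid I →₀ ℂ := x.coeff

/-- The weight of a monomial in `FA I`. -/
def wordWt (m : FreeMonoid I) : I →₀ ℕ := wordWeight (FreeMonoid.toList m)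

/-- The generator `e_i` of `FA I`. -/
def eGen (i : I) : FA I := MonoidAlgebra.single (FreeMonoid.of i) 1

/-- The Koszul sign `(-1)^{|m||m'|}` attached to a pair of monomials. -/
def ssign (Ψ : Set I) (m m' : FreeMonoid I) : ℂ :=
  if wtPar Ψ (wordWt m) = 1 ∧ wtPar Ψ (wordWt m') = 1 then -1 else 1

/-- The super-commutator `[x,y] = xy - (-1)^{|x||y|} yx` on `FA I`, extended bilinearly
from homogeneous monomials. -/
def sbra (Ψ : Set I) (x y : FA I) : FA I :=
  Finsupp.sum (coeffs x) fun m c => Finsupp.sum (coeffs y) fun m' c' =>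
    (c * c') • (MonoidAlgebra.single (m * m') 1 - ssign Ψ m m' • MonoidAlgebra.single (m' * m) 1)

/-- Lie monomials in the generators `e_i`: the elements of `FA I` obtained from the
generators by iterated super-brackets.  Their span is the free Lie superalgebra on the
`ℤ/2`-graded set `I`. -/
inductive IsLieWord (Ψ : Set I) : FA I → Prop
  | gen (i : I) : IsLieWord Ψ (eGen i)
  | bra {x y : FA I} : IsLieWord Ψ x → IsLieWord Ψ y → IsLieWord Ψ (sbra Ψ x y)

/-- Iterated adjoint action `(ad x)^n y` with respect to the super-bracket. -/
def adpow (Ψ : Set I) : ℕ → FA I → FA I → FA I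
  | 0, _, y => y
  | n + 1, x, y => sbra Ψ x (adpow Ψ n x y)

/-- The Serre exponent `1 - a_{ij}`. -/
def serreExp (A : BKMSupermatrix I) (i j : I) : ℕ := (1 - ⌊A.a i j⌋).toNat

/-- The halved Serre exponent `1 - a_{ij}/2`. -/
def serreExpHalf (A : BKMSupermatrix I) (i j : I) : ℕ := (1 - ⌊A.a i j / 2⌋).toNat

/-- The defining relations of the positive part of the BKM superalgebra `g(A,Ψ)`:
the Serre relations `(ad e_i)^{1-a_{ij}} e_j = 0` for real `i ≠ j`,
`(ad e_i)^{1-a_{ij}/2} e_j = 0` for `i ∈ Ψ^{re}`, `i ≠ j`,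
`(ad e_i)^{1-a_{ii}/2} e_i = 0` for `i ∈ Ψ₀`, and the commutation relations
`[e_i, e_j] = 0` whenever `a_{ij} = 0`. -/
def bkmRels (A : BKMSupermatrix I) : Set (FA I) :=
  {x | ∃ i j, i ∈ A.Ire ∧ i ≠ j ∧ x = adpow A.Ψ (serreExp A i j) (eGen i) (eGen j)} ∪
  {x | ∃ i j, i ∈ A.Ire ∧ i ∈ A.Ψ ∧ i ≠ j ∧
        x = adpow A.Ψ (serreExpHalf A i j) (eGen i) (eGen j)} ∪
  {x | ∃ i, i ∈ A.Psi0 ∧ x = adpow A.Ψ (serreExpHalf A i i) (eGen i) (eGen i)} ∪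
  {x | ∃ i j, i ≠ j ∧ A.a i j = 0 ∧ x = sbra A.Ψ (eGen i) (eGen j)}

/-- Only the commutation relations `[e_i, e_j] = 0` for `{i,j}` not an edge of `G`;
these are the defining relations of the free partially commutative Lie superalgebra
`LS(G,Ψ)`. -/
def commRels (G : SimpleGraph I) (Ψ : Set I) : Set (FA I) :=
  {x | ∃ i j, i ≠ j ∧ ¬ G.Adj i j ∧ x = sbra Ψ (eGen i) (eGen j)}

/-- The relation imposing `x = 0` for every `x` in a set `R` of relations. -/
def relOf (R : Set (FA I)) : FA I → FA I → Prop := fun x y => x ∈ R ∧ y = 0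

/-- The quotient of the free associative superalgebra by the two-sided ideal generated by
a set of relations; by (super) PBW it is the enveloping algebra of the corresponding
quotient of the free Lie superalgebra, which embeds into it. -/
abbrev QuotAlg (R : Set (FA I)) := RingQuot (relOf R)

/-- The quotient map. -/
def quotMap (R : Set (FA I)) : FA I →ₐ[ℂ] QuotAlg R := RingQuot.mkAlgHom ℂ (relOf R)

/-- The weight-`k` graded piece of the quotient Lie superalgebra: the span of the images
of the Lie monomials of weight `k`. -/
def imageWeight (Ψ : Set I) (R : Set (FA I)) (k : I →₀ ℕ) : Submodule ℂ (QuotAlg R) :=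
  Submodule.span ℂ
    {y | ∃ x : FA I, IsLieWord Ψ x ∧ (∀ m, coeffs x m ≠ 0 → wordWt m = k) ∧ y = quotMap R x}

/-- The root space `g_{η(k)}` of the BKM superalgebra `g(A,Ψ)` (for `k ∈ Q₊`, it lies in
the positive part `n₊`, which is the free Lie superalgebra on the `e_i` modulo the Serre
and commutation relations). -/
def gWeight (A : BKMSupermatrix I) (k : I →₀ ℕ) : Submodule ℂ (QuotAlg (bkmRels A)) :=
  imageWeight A.Ψ (bkmRels A) k

/-- The weight-`k` graded piece `LS_k(G,Ψ)` of the free partially commutative Lie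
superalgebra `LS(G,Ψ)` associated to the supergraph `(G,Ψ)`. -/
def LSwt (G : SimpleGraph I) (Ψ : Set I) (k : I →₀ ℕ) :
    Submodule ℂ (QuotAlg (commRels G Ψ)) :=
  imageWeight Ψ (commRels G Ψ) k

/-- `η(k) = Σ kᵢ αᵢ` is *free* if `kᵢ ≤ 1` for every real simple root and every odd
simple root of zero norm. -/
def IsFreeWt (A : BKMSupermatrix I) (k : I →₀ ℕ) : Prop := ∀ i ∈ A.Ire ∪ A.Psi0, k i ≤ 1

/-- `η(k)` is a positive root of `g(A,Ψ)`: it is nonzero and its root space is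
nonzero. -/
def IsPosRoot (A : BKMSupermatrix I) (k : I →₀ ℕ) : Prop := k ≠ 0 ∧ gWeight A k ≠ ⊥

/-- The multiplicity `mult η(k) = dim g_{η(k)}`. -/
def rootMult (A : BKMSupermatrix I) (k : I →₀ ℕ) : ℕ := Module.finrank ℂ ↥(gWeight A k)

/-!
Weight is a grading of the free associative algebra `FA I` and every defining relation of
`g(A,Ψ)` is homogeneous. A Serre relation either is a commutation relation `[e_i,e_j]`
(when `a_{ij} = 0`) or has a weight whose `i`-th coordinate is at least `2` for some
`i ∈ I^re ∪ Ψ₀`; in the latter case no monomial multiple of it has a free weight. Hence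
the weight-`k` component of the ideal generated by the BKM relations is the weight-`k`
component of the ideal generated by the commutation relations, so the natural surjection
`LS(G,Ψ) → n₊` is injective in free weight `k`.
-/

lemma wordWt_mul (m m' : FreeMonoid I) : wordWt (m * m') = wordWt m + wordWt m' := by
  simp [wordWt, wordWeight, FreeMonoid.toList_mul]

lemma wordWt_of (i : I) : wordWt (FreeMonoid.of i) = Finsupp.single i 1 := by
  simp [wordWt, wordWeight, FreeMonoid.toList_of]

def homogComponent (w : I →₀ ℕ) : Submodule ℂ (FA I) where
  carrier := {x | ∀ m, coeffs x m ≠ 0 → wordWt m = w}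
  zero_mem' m hm := absurd rfl hm
  add_mem' {x y} hx hy m hm := by
    by_cases hxm : coeffs x m = 0
    · refine hy m fun hym => hm ?_
      simp_all [coeffs]
    · exact hx m hxm
  smul_mem' c x hx m hm := hx m fun h => hm (by simp_all [coeffs])

lemma single_mem_homogComponent (m : FreeMonoid I) (c : ℂ) :
    MonoidAlgebra.single m c ∈ homogComponent (wordWt m) := by
  intro m' hm'
  by_contra h
  exact hm' (Finsupp.single_eq_of_ne' fun he => h (he ▸ rfl))

lemma eGen_mem_homogComponent (i : I) : eGen i ∈ homogComponent (Finsupp.single i 1) :=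
  wordWt_of i ▸ single_mem_homogComponent _ _

lemma mul_mem_homogComponent {w w' : I →₀ ℕ} {x y : FA I} (hx : x ∈ homogComponent w)
    (hy : y ∈ homogComponent w') : x * y ∈ homogComponent (w + w') := by
  intro m hm
  obtain ⟨a, ha, b, hb, rfl⟩ := Finset.mem_mul.mp
    (MonoidAlgebra.support_coeff_mul_subset x y (Finsupp.mem_support_iff.mpr hm))
  rw [wordWt_mul, hx a (Finsupp.mem_support_iff.mp ha), hy b (Finsupp.mem_support_iff.mp hb)]

lemma sbra_mem_homogComponent {Ψ : Set I} {w w' : I →₀ ℕ} {x y : FA I}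
    (hx : x ∈ homogComponent w) (hy : y ∈ homogComponent w') :
    sbra Ψ x y ∈ homogComponent (w + w') := by
  refine Submodule.finsuppSum_mem _ _ _ _ fun m hm => ?_
  refine Submodule.finsuppSum_mem _ _ _ _ fun m' hm' => Submodule.smul_mem _ _ ?_
  have hwm : wordWt m = w := hx m hm
  have hwm' : wordWt m' = w' := hy m' hm'
  refine Submodule.sub_mem _ ?_ (Submodule.smul_mem _ _ ?_)
  · simpa [wordWt_mul, hwm, hwm'] using single_mem_homogComponent (m * m') 1
  · simpa [wordWt_mul, hwm, hwm', add_comm] using single_mem_homogComponent (m' * m) 1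

lemma adpow_mem_homogComponent {Ψ : Set I} (n : ℕ) (i j : I) :
    adpow Ψ n (eGen i) (eGen j) ∈
      homogComponent (n • Finsupp.single i 1 + Finsupp.single j 1) := by
  induction n with
  | zero => simpa [adpow] using eGen_mem_homogComponent j
  | succ n ih =>
    have h := sbra_mem_homogComponent (Ψ := Ψ) (eGen_mem_homogComponent i) ih
    rwa [← add_assoc, ← succ_nsmul'] at h

def projWt (k : I →₀ ℕ) : FA I →ₗ[ℂ] FA I where
  toFun x := MonoidAlgebra.ofCoeff (x.coeff.filter fun m => wordWt m = k)
  map_add' _ _ := congrArg MonoidAlgebra.ofCoeff Finsupp.filter_add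
  map_smul' _ _ := congrArg MonoidAlgebra.ofCoeff Finsupp.filter_smul

lemma projWt_of_mem {k : I →₀ ℕ} {x : FA I} (hx : x ∈ homogComponent k) : projWt k x = x :=
  MonoidAlgebra.coeff_injective ((Finsupp.filter_eq_self_iff _ _).mpr hx)

lemma projWt_of_mem_of_ne {k w : I →₀ ℕ} {x : FA I} (hx : x ∈ homogComponent w)
    (hwk : w ≠ k) : projWt k x = 0 :=
  MonoidAlgebra.coeff_injective ((Finsupp.filter_eq_zero_iff _ _).mpr
    fun m hm => by_contra fun h => hwk (hx m h ▸ hm))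

lemma ker_quotMap (R : Set (FA I)) : TwoSidedIdeal.ker (quotMap R) = TwoSidedIdeal.span R := by
  refine le_antisymm (fun x hx => ?_) (TwoSidedIdeal.span_le.mpr fun r hr => ?_)
  · set J := TwoSidedIdeal.span R
    have hJ : ∀ ⦃x y⦄, relOf R x y → J.ringCon.mk' x = J.ringCon.mk' y := by
      rintro _ _ ⟨hr, rfl⟩
      rw [map_zero, ← TwoSidedIdeal.mem_ker, TwoSidedIdeal.ker_ringCon_mk']
      exact TwoSidedIdeal.subset_span hr
    have hlift := RingQuot.lift_mkRingHom_apply J.ringCon.mk' hJ x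
    rw [← RingQuot.mkAlgHom_coe ℂ] at hlift
    rw [TwoSidedIdeal.mem_ker] at hx
    rw [← TwoSidedIdeal.ker_ringCon_mk' J, TwoSidedIdeal.mem_ker, ← hlift]
    exact (congrArg _ hx).trans (map_zero _)
  · rw [SetLike.mem_coe, TwoSidedIdeal.mem_ker, quotMap, RingQuot.mkAlgHom_rel ℂ ⟨hr, rfl⟩,
      map_zero]

lemma projWt_single_mul_mul_single_mem_span {R' : Set (FA I)} {k w : I →₀ ℕ} {r : FA I}
    (hrw : r ∈ homogComponent w)
    (hk : ∀ a b : FreeMonoid I, wordWt a + w + wordWt b = k → r ∈ TwoSidedIdeal.span R')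
    (a b : FreeMonoid I) (c c' : ℂ) :
    projWt k (MonoidAlgebra.single a c * r * MonoidAlgebra.single b c') ∈
      TwoSidedIdeal.span R' := by
  have hhom := mul_mem_homogComponent
    (mul_mem_homogComponent (single_mem_homogComponent a c) hrw) (single_mem_homogComponent b c')
  by_cases hwk : wordWt a + w + wordWt b = k
  · rw [projWt_of_mem (hwk ▸ hhom)]
    exact TwoSidedIdeal.mul_mem_right _ _ _ (TwoSidedIdeal.mul_mem_left _ _ _ (hk a b hwk))
  · rw [projWt_of_mem_of_ne hhom hwk]
    exact TwoSidedIdeal.zero_mem _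

lemma projWt_mul_mul_mem_span {R' : Set (FA I)} {k w : I →₀ ℕ} {r : FA I}
    (hrw : r ∈ homogComponent w)
    (hk : ∀ a b : FreeMonoid I, wordWt a + w + wordWt b = k → r ∈ TwoSidedIdeal.span R')
    (x y : FA I) : projWt k (x * r * y) ∈ TwoSidedIdeal.span R' := by
  induction x using MonoidAlgebra.induction_linear with
  | zero => simpa only [zero_mul, map_zero] using TwoSidedIdeal.zero_mem _
  | add x x' hx hx' => simpa only [add_mul, map_add] using TwoSidedIdeal.add_mem _ hx hx'
  | single a c =>
    induction y using MonoidAlgebra.induction_linear with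
    | zero => simpa only [mul_zero, map_zero] using TwoSidedIdeal.zero_mem _
    | add y y' hy hy' => simpa only [mul_add, map_add] using TwoSidedIdeal.add_mem _ hy hy'
    | single b c' => exact projWt_single_mul_mul_single_mem_span hrw hk a b c c'

lemma projWt_mem_span {R R' : Set (FA I)} {k : I →₀ ℕ}
    (hR : ∀ r ∈ R, ∃ w, r ∈ homogComponent w ∧
      ∀ a b : FreeMonoid I, wordWt a + w + wordWt b = k → r ∈ TwoSidedIdeal.span R')
    {x : FA I} (hx : x ∈ TwoSidedIdeal.span R) : projWt k x ∈ TwoSidedIdeal.span R' := by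
  rw [TwoSidedIdeal.mem_span_iff_mem_addSubgroup_closure] at hx
  induction hx using AddSubgroup.closure_induction with
  | mem x hx =>
    obtain ⟨_, ⟨a, -, r, hr, rfl⟩, b, -, rfl⟩ := hx
    obtain ⟨w, hrw, hk⟩ := hR r hr
    exact projWt_mul_mul_mem_span hrw hk a b
  | zero => simpa only [map_zero] using TwoSidedIdeal.zero_mem _
  | add x y _ _ hx hy => simpa only [map_add] using TwoSidedIdeal.add_mem _ hx hy
  | neg x _ hx => simpa only [map_neg] using TwoSidedIdeal.neg_mem _ hx

lemma IsFreeWt.mono {A : BKMSupermatrix I} {k w : I →₀ ℕ} (hk : IsFreeWt A k)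
    (hwk : w ≤ k) : IsFreeWt A w :=
  fun i hi => (hwk i).trans (hk i hi)

namespace BKMSupermatrix

variable {A : BKMSupermatrix I}

lemma serreExp_eq_one_or_two_le {i j : I} (hne : i ≠ j) :
    serreExp A i j = 1 ∧ A.a i j = 0 ∨ 2 ≤ serreExp A i j := by
  rcases (A.offdiag i j hne).lt_or_eq with hlt | heq
  · have : ⌊A.a i j⌋ < 0 := Int.floor_lt.mpr (by simpa using hlt)
    right; rw [serreExp]; omega
  · left; simp [serreExp, heq]

lemma serreExpHalf_eq_one_or_two_le {i j : I} (hne : i ≠ j) :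
    serreExpHalf A i j = 1 ∧ A.a i j = 0 ∨ 2 ≤ serreExpHalf A i j := by
  rcases (A.offdiag i j hne).lt_or_eq with hlt | heq
  · have : ⌊A.a i j / 2⌋ < 0 := Int.floor_lt.mpr (by push_cast; linarith)
    right; rw [serreExpHalf]; omega
  · left; simp [serreExpHalf, heq]

lemma not_isFreeWt_of_two_le {w : I →₀ ℕ} {i : I} (hi : i ∈ A.Ire ∪ A.Psi0)
    (hw : 2 ≤ w i) : ¬ IsFreeWt A w :=
  fun hfree => by have := hfree i hi; omega

lemma adpow_mem_commRels_or_not_isFreeWt {n : ℕ} {i j : I} (hi : i ∈ A.Ire ∪ A.Psi0)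
    (hne : i ≠ j) (hn : n = 1 ∧ A.a i j = 0 ∨ 2 ≤ n) :
    adpow A.Ψ n (eGen i) (eGen j) ∈ commRels A.quasiDynkin A.Ψ ∨
      ¬ IsFreeWt A (n • Finsupp.single i 1 + Finsupp.single j 1) := by
  rcases hn with ⟨rfl, ha⟩ | hn
  · exact Or.inl ⟨i, j, hne, fun hadj => hadj.2 ha, rfl⟩
  · refine Or.inr (not_isFreeWt_of_two_le hi ?_)
    simpa [Finsupp.single_apply, hne.symm] using hn

lemma bkmRels_cases {r : FA I} (hr : r ∈ bkmRels A) :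
    ∃ w, r ∈ homogComponent w ∧ (r ∈ commRels A.quasiDynkin A.Ψ ∨ ¬ IsFreeWt A w) := by
  rcases hr with ((⟨i, j, hi, hne, rfl⟩ | ⟨i, j, hi, -, hne, rfl⟩) | ⟨i, hi, rfl⟩) |
    ⟨i, j, hne, ha, rfl⟩
  · exact ⟨_, adpow_mem_homogComponent _ i j,
      adpow_mem_commRels_or_not_isFreeWt (Or.inl hi) hne (serreExp_eq_one_or_two_le hne)⟩
  · exact ⟨_, adpow_mem_homogComponent _ i j,
      adpow_mem_commRels_or_not_isFreeWt (Or.inl hi) hne (serreExpHalf_eq_one_or_two_le hne)⟩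
  · have hn : serreExpHalf A i i = 1 := by simp [serreExpHalf, hi.2]
    refine ⟨_, adpow_mem_homogComponent _ i i, Or.inr (not_isFreeWt_of_two_le (Or.inr hi) ?_)⟩
    simp [hn]
  · exact ⟨_, sbra_mem_homogComponent (eGen_mem_homogComponent i) (eGen_mem_homogComponent j),
      Or.inl ⟨i, j, hne, fun hadj => hadj.2 ha, rfl⟩⟩

lemma commRels_subset_bkmRels : commRels A.quasiDynkin A.Ψ ⊆ bkmRels A := by
  rintro _ ⟨i, j, hne, hnadj, rfl⟩
  exact Or.inr ⟨i, j, hne, not_not.mp fun ha => hnadj ⟨hne, ha⟩, rfl⟩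

lemma quotMap_commRels_eq_zero {k : I →₀ ℕ} (hfree : IsFreeWt A k) {x : FA I}
    (hx : x ∈ homogComponent k)
    (h0 : quotMap (bkmRels A) x = 0) : quotMap (commRels A.quasiDynkin A.Ψ) x = 0 := by
  have hspan : x ∈ TwoSidedIdeal.span (bkmRels A) := by
    rw [← ker_quotMap, TwoSidedIdeal.mem_ker]
    exact h0
  rw [← TwoSidedIdeal.mem_ker, ker_quotMap, ← projWt_of_mem hx]
  refine projWt_mem_span (fun r hr => ?_) hspan
  obtain ⟨w, hrw, hcomm | hnfree⟩ := bkmRels_cases hr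
  · exact ⟨w, hrw, fun _ _ _ => TwoSidedIdeal.subset_span hcomm⟩
  · refine ⟨w, hrw, fun a b hk => absurd (hfree.mono ?_) hnfree⟩
    rw [← hk, add_right_comm]
    exact le_add_self

end BKMSupermatrix

section QuotientComparison

variable {R R' : Set (FA I)}

def quotHom (h : R ⊆ R') : QuotAlg R →ₐ[ℂ] QuotAlg R' :=
  RingQuot.liftAlgHom ℂ ⟨quotMap R', by
    rintro _ _ ⟨hr, rfl⟩
    rw [quotMap, RingQuot.mkAlgHom_rel ℂ ⟨h hr, rfl⟩]⟩

@[simp]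
lemma quotHom_quotMap (h : R ⊆ R') (x : FA I) : quotHom h (quotMap R x) = quotMap R' x :=
  RingQuot.liftAlgHom_mkAlgHom_apply ℂ _ _ x

lemma map_quotHom_imageWeight (h : R ⊆ R') (Ψ : Set I) (k : I →₀ ℕ) :
    (imageWeight Ψ R k).map (quotHom h).toLinearMap = imageWeight Ψ R' k := by
  rw [imageWeight, imageWeight, Submodule.map_span]
  congr 1
  ext z
  constructor
  · rintro ⟨_, ⟨x, hx, hxk, rfl⟩, rfl⟩
    exact ⟨x, hx, hxk, quotHom_quotMap h x⟩
  · rintro ⟨x, hx, hxk, rfl⟩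
    exact ⟨quotMap R x, ⟨x, hx, hxk, rfl⟩, quotHom_quotMap h x⟩

lemma imageWeight_le_map_homogComponent (Ψ : Set I) (R : Set (FA I)) (k : I →₀ ℕ) :
    imageWeight Ψ R k ≤ (homogComponent k).map (quotMap R).toLinearMap :=
  Submodule.span_le.mpr fun _ ⟨x, _, hxk, hy⟩ => ⟨x, hxk, hy.symm⟩

lemma injOn_quotHom_imageWeight (h : R ⊆ R') (Ψ : Set I) {k : I →₀ ℕ}
    (hker : ∀ x ∈ homogComponent k, quotMap R' x = 0 → quotMap R x = 0) :
    Set.InjOn (quotHom h) (imageWeight Ψ R k) := by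
  refine (Set.injOn_iff_map_eq_zero _ _).mpr fun y hy hy0 => ?_
  obtain ⟨x, hxk, rfl⟩ := imageWeight_le_map_homogComponent Ψ R k hy
  exact hker x hxk (by simpa using hy0)

def imageWeightEquiv (h : R ⊆ R') (Ψ : Set I) {k : I →₀ ℕ}
    (hker : ∀ x ∈ homogComponent k, quotMap R' x = 0 → quotMap R x = 0) :
    imageWeight Ψ R k ≃ₗ[ℂ] imageWeight Ψ R' k :=
  (LinearEquiv.ofBijective ((quotHom h).toLinearMap.submoduleMap _)
    ⟨LinearMap.submoduleMap_injective_of_injOn (injOn_quotHom_imageWeight h Ψ hker),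
      LinearMap.submoduleMap_surjective _ _⟩).trans
    (LinearEquiv.ofEq _ _ (map_quotHom_imageWeight h Ψ k))

end QuotientComparison

/-- For a free weight `k` (i.e. `kᵢ ≤ 1` for `i ∈ I^re ∪ Ψ₀`), the root space
`g_{η(k)}` of a BKM superalgebra with quasi Dynkin diagram `(G,Ψ)` is isomorphic, as a
vector space, to the `k`-graded component `LS_k(G,Ψ)` of the free partially commutative
Lie superalgebra; in particular `mult η(k) = dim LS_k(G,Ψ)`. -/
theorem free_root_space_iso_LS {I : Type*} (A : BKMSupermatrix I) (k : I →₀ ℕ)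
    (hfree : IsFreeWt A k) :
    Nonempty (↥(gWeight A k) ≃ₗ[ℂ] ↥(LSwt A.quasiDynkin A.Ψ k)) ∧
      Module.rank ℂ ↥(gWeight A k) = Module.rank ℂ ↥(LSwt A.quasiDynkin A.Ψ k) := by
  let e : LSwt A.quasiDynkin A.Ψ k ≃ₗ[ℂ] gWeight A k :=
    imageWeightEquiv A.commRels_subset_bkmRels A.Ψ fun _ hx =>
      A.quotMap_commRels_eq_zero hfree hx
  exact ⟨⟨e.symm⟩, e.symm.rank_eq⟩
end
end

section
/- Fix a vertex i minimal in the total order on I, and let X_i be the set of elements w of the free partially commutative monoid M(I,G,Ψ) whose initial alphabet is exactly {i} with i occurring exactly once in w. Then under the isomorphism of M(I,G,Ψ) with the heap monoid, w ∈ X_i if and only if the corresponding heap is an elementary admissible pyramid (a 'super-letter') with basis i. -/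
open scoped Classical
noncomputable section

/-- One commutation move: exchange two adjacent letters which are not adjacent in the
graph `G`. -/
def CommStep {I : Type*} (G : SimpleGraph I) (w₁ w₂ : List I) : Prop :=
  ∃ (l r : List I) (x y : I), ¬ G.Adj x y ∧ w₁ = l ++ x :: y :: r ∧ w₂ = l ++ y :: x :: r

theorem CommStep.append_left {I : Type*} {G : SimpleGraph I} {a b : List I}
    (h : CommStep G a b) (c : List I) : CommStep G (c ++ a) (c ++ b) := by
  obtain ⟨l, r, x, y, hxy, rfl, rfl⟩ := h
  exact ⟨c ++ l, r, x, y, hxy, by simp, by simp⟩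

theorem CommStep.append_right {I : Type*} {G : SimpleGraph I} {a b : List I}
    (h : CommStep G a b) (c : List I) : CommStep G (a ++ c) (b ++ c) := by
  obtain ⟨l, r, x, y, hxy, rfl, rfl⟩ := h
  exact ⟨l, r ++ c, x, y, hxy, by simp, by simp⟩

/-- The free partially commutative monoid `M(I,G,Ψ)` — equivalently, by Viennot's
theorem, the monoid `H(I,ζ)` of heaps of pieces over `(G,Ψ)` — realized as the quotient
of the free monoid on `I` by the commutations of non-adjacent letters. -/
def Trace {I : Type*} (G : SimpleGraph I) := Quot (CommStep G)

/-- The heap (trace) represented by a word. -/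
def Trace.mk {I : Type*} (G : SimpleGraph I) (w : List I) : Trace G := Quot.mk _ w

/-- Superposition of heaps (concatenation of traces). -/
def Trace.mul {I : Type*} {G : SimpleGraph I} (q₁ q₂ : Trace G) : Trace G :=
  Quot.liftOn q₁
    (fun a => Quot.liftOn q₂ (fun b => Trace.mk G (a ++ b))
      (fun _ _ h => Quot.sound (h.append_left a)))
    (fun _ _ h => by
      induction q₂ using Quot.ind
      exact Quot.sound (h.append_right _))

instance {I : Type*} (G : SimpleGraph I) : Monoid (Trace G) where
  mul := Trace.mul
  one := Trace.mk G []
  mul_assoc a b c := by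
    induction a using Quot.ind
    induction b using Quot.ind
    induction c using Quot.ind
    rename_i a b c
    show Trace.mk G ((a ++ b) ++ c) = Trace.mk G (a ++ (b ++ c))
    rw [List.append_assoc]
  one_mul a := by
    induction a using Quot.ind
    rfl
  mul_one a := by
    induction a using Quot.ind
    rename_i a
    show Trace.mk G (a ++ []) = Trace.mk G a
    rw [List.append_nil]

theorem wordWeight_commStep {I : Type*} {G : SimpleGraph I} {a b : List I}
    (h : CommStep G a b) : wordWeight a = wordWeight b := by
  obtain ⟨l, r, x, y, _, rfl, rfl⟩ := h
  simp only [wordWeight, List.map_append, List.map_cons, List.sum_append, List.sum_cons]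
  abel

/-- The weight of a heap: the number of pieces in each position. -/
def traceWeight {I : Type*} {G : SimpleGraph I} : Trace G → (I →₀ ℕ) :=
  Quot.lift wordWeight fun _ _ h => wordWeight_commStep h

/-- A heap is odd when it contains an odd number of pieces in odd positions (positions
belonging to `Ψ`). -/
def traceOdd {I : Type*} {G : SimpleGraph I} (Ψ : Set I) (t : Trace G) : Prop :=
  wtPar Ψ (traceWeight t) = 1

/-- `w` is the standard word `st(t)` of the heap `t`: the lexicographically maximal word
representing `t`. -/
def IsStandardWord {I : Type*} [LinearOrder I] {G : SimpleGraph I}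
    (t : Trace G) (w : List I) : Prop :=
  Trace.mk G w = t ∧ ∀ w' : List I, Trace.mk G w' = t → w' ≤ w

/-- The total order on heaps induced by the lexicographic order of standard words. -/
def traceLE {I : Type*} [LinearOrder I] {G : SimpleGraph I} (t t' : Trace G) : Prop :=
  ∃ w w' : List I, IsStandardWord t w ∧ IsStandardWord t' w' ∧ w ≤ w'

/-- The strict order on heaps induced by the lexicographic order of standard words. -/
def traceLT {I : Type*} [LinearOrder I] {G : SimpleGraph I} (t t' : Trace G) : Prop :=
  ∃ w w' : List I, IsStandardWord t w ∧ IsStandardWord t' w' ∧ w < w'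

/-- A heap is primitive if `t = u ∘ v = v ∘ u` forces `u` or `v` to be empty. -/
def IsPrimitiveHeap {I : Type*} {G : SimpleGraph I} (t : Trace G) : Prop :=
  ∀ u v : Trace G, t = u * v → t = v * u → u = 1 ∨ v = 1

/-- Transposition of a factorization: `u ∘ v ↦ v ∘ u`. -/
def ConjStep {I : Type*} {G : SimpleGraph I} (t t' : Trace G) : Prop :=
  ∃ u v : Trace G, t = u * v ∧ t' = v * u

/-- The conjugacy relation on heaps: the equivalence generated by transposition. -/
def TraceConj {I : Type*} {G : SimpleGraph I} : Trace G → Trace G → Prop :=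
  Relation.EqvGen ConjStep

/-- A nonempty heap is a Lyndon heap if it is primitive and minimal in its conjugacy
class. -/
def IsLyndonHeap {I : Type*} [LinearOrder I] {G : SimpleGraph I} (t : Trace G) : Prop :=
  t ≠ 1 ∧ IsPrimitiveHeap t ∧ ∀ t' : Trace G, TraceConj t t' → traceLE t t'

/-- A super Lyndon heap: either a Lyndon heap, or `F ∘ F` with `F` an odd Lyndon
heap. -/
def IsSuperLyndonHeap {I : Type*} [LinearOrder I] {G : SimpleGraph I}
    (Ψ : Set I) (t : Trace G) : Prop :=
  IsLyndonHeap t ∨ ∃ f : Trace G, IsLyndonHeap f ∧ traceOdd Ψ f ∧ t = f * f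

/-- `(f, n)` is the standard factorization `Σ(t)` of the Lyndon heap `t`:
`t = f ∘ n` with `f` nonempty, `n` Lyndon, and `n` minimal in the total order on heaps
among all such right factors. -/
def IsStdFact {I : Type*} [LinearOrder I] {G : SimpleGraph I} (t f n : Trace G) : Prop :=
  f ≠ 1 ∧ t = f * n ∧ IsLyndonHeap n ∧
    ∀ f' n' : Trace G, f' ≠ 1 → t = f' * n' → IsLyndonHeap n' → traceLE n n'

/-- The set of letters that can occur first in some word representing the heap `t`;
these are exactly the positions of the minimal pieces of `t`, so `t` is a pyramid iff
this set is a singleton. -/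
def firstLetters {I : Type*} (G : SimpleGraph I) (t : Trace G) : Set I :=
  {a | ∃ u : List I, Trace.mk G (a :: u) = t}

/-- The initial multiplicity of the letter `a` in the word `w` (viewed in the free
partially commutative monoid): the largest `m` such that `w = aᵐ u` in `M(I,G,Ψ)`. -/
def initMult {I : Type*} (G : SimpleGraph I) (w : List I) (a : I) : ℕ :=
  sSup {m : ℕ | ∃ u : List I, Trace.mk G w = Trace.mk G (List.replicate m a ++ u)}

/-- A pyramid with basis `i`: a nonempty heap with a unique minimal piece, in position
`i`. -/
def IsPyramidWithBasis {I : Type*} {G : SimpleGraph I} (t : Trace G) (i : I) : Prop :=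
  t ≠ 1 ∧ firstLetters G t = {i}

/-- An elementary heap relative to `i`: the position `i` carries exactly one piece. -/
def IsElementary {I : Type*} {G : SimpleGraph I} (t : Trace G) (i : I) : Prop :=
  traceWeight t i = 1

/-- An admissible pyramid: its basis occupies the lowest position present, with respect
to the total order on `I`. -/
def IsAdmissible {I : Type*} [LinearOrder I] {G : SimpleGraph I} (t : Trace G) (i : I) :
    Prop :=
  ∀ j ∈ (traceWeight t).support, i ≤ j

/-- A super-letter with basis `i`: an elementary admissible pyramid with basis `i`. -/
def IsSuperLetter {I : Type*} [LinearOrder I] {G : SimpleGraph I} (t : Trace G) (i : I) :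
    Prop :=
  IsPyramidWithBasis t i ∧ IsElementary t i ∧ IsAdmissible t i

/-- The heap obtained by superposing a word of super-letters. -/
def sletterProd {I : Type*} [LinearOrder I] {G : SimpleGraph I} {i : I}
    (l : List {t : Trace G // IsSuperLetter t i}) : Trace G :=
  (l.map Subtype.val).prod

/-- Lyndon words over an alphabet equipped with a strict order `r`: nonempty words that
are `Lex r`-smaller than all of their proper cyclic rotations. -/
def IsLyndonListRel {β : Type*} (r : β → β → Prop) (l : List β) : Prop :=
  l ≠ [] ∧ ∀ u v : List β, u ≠ [] → v ≠ [] → l = u ++ v → List.Lex r l (v ++ u)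

/-- Super Lyndon words over the alphabet of super-letters: Lyndon words, or `u u` with
`u` Lyndon and `π(u)` odd. -/
def IsSuperLyndonListRel {I : Type*} [LinearOrder I] {G : SimpleGraph I} (Ψ : Set I)
    {i : I} (l : List {t : Trace G // IsSuperLetter t i}) : Prop :=
  IsLyndonListRel (fun a b => traceLT a.1 b.1) l ∨
    ∃ u : List {t : Trace G // IsSuperLetter t i},
      IsLyndonListRel (fun a b => traceLT a.1 b.1) u ∧ traceOdd Ψ (sletterProd u) ∧
        l = u ++ u

theorem wordWeight_apply_count {I : Type*} [DecidableEq I] (w : List I) (a : I) :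
    wordWeight w a = w.count a := by
  induction w with
  | nil => simp [wordWeight]
  | cons x w ih =>
    have : wordWeight (x :: w) = Finsupp.single x 1 + wordWeight w := by
      simp [wordWeight]
    rw [this, Finsupp.add_apply, ih, List.count_cons, Finsupp.single_apply]
    by_cases h : x = a
    · simp [h]; omega
    · simp [h]

theorem wordWeight_eq_of_trace_eq {I : Type*} {G : SimpleGraph I} {v w : List I}
    (h : Trace.mk G v = Trace.mk G w) : wordWeight v = wordWeight w :=
  congrArg traceWeight h

/-- Fix a vertex `i` minimal in the total order on `I`.  A word `w` lies in `X_i`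
(its initial alphabet, with multiplicity, is exactly `{i}`, and `i` occurs exactly once
in `w`) if and only if the corresponding heap is an elementary admissible pyramid
(a super-letter) with basis `i`. -/
theorem mem_Xi_iff_superLetter {I : Type*} [LinearOrder I] (G : SimpleGraph I) (i : I)
    (hmin : ∀ j, i ≤ j) (w : List I) :
    (initMult G w i = 1 ∧ (∀ j, j ≠ i → initMult G w j = 0) ∧ wordWeight w i = 1) ↔
      IsSuperLetter (Trace.mk G w) i := by
  classical
  set S : I → Set ℕ := fun a =>
    {m : ℕ | ∃ u : List I, Trace.mk G w = Trace.mk G (List.replicate m a ++ u)} with hSdef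
  have hIM : ∀ a, initMult G w a = sSup (S a) := fun a => rfl
  have hS0 : ∀ a, 0 ∈ S a := fun a => ⟨w, rfl⟩
  have hSb : ∀ a, ∀ m ∈ S a, m ≤ wordWeight w a := by
    rintro a m ⟨u, hu⟩
    have h := wordWeight_eq_of_trace_eq hu
    have h2 := congrFun (congrArg DFunLike.coe h) a
    rw [wordWeight_apply_count, wordWeight_apply_count] at h2
    simp [List.count_replicate] at h2
    rw [wordWeight_apply_count]
    omega
  have hBdd : ∀ a, BddAbove (S a) := fun a => ⟨wordWeight w a, hSb a⟩
  have hdc : ∀ a (m m' : ℕ), m' ≤ m → m ∈ S a → m' ∈ S a := by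
    rintro a m m' hle ⟨u, hu⟩
    refine ⟨List.replicate (m - m') a ++ u, ?_⟩
    rw [hu]
    congr 1
    rw [← List.append_assoc, ← List.replicate_add]
    congr 2
    omega
  have hfirst : ∀ a, a ∈ firstLetters G (Trace.mk G w) ↔ 1 ∈ S a := by
    intro a
    constructor
    · rintro ⟨u, hu⟩
      exact ⟨u, by rw [← hu]; simp⟩
    · rintro ⟨u, hu⟩
      exact ⟨u, by rw [hu]; simp⟩
  constructor
  · rintro ⟨h1, h0, hw⟩
    have hi1 : 1 ∈ S i := by
      have hm := Nat.sSup_mem ⟨0, hS0 i⟩ (hBdd i)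
      rw [← hIM i, h1] at hm
      exact hm
    refine ⟨⟨?_, ?_⟩, hw, fun j _ => hmin j⟩
    · intro habs
      have : wordWeight w = wordWeight ([] : List I) :=
        wordWeight_eq_of_trace_eq habs
      rw [this] at hw
      simp [wordWeight] at hw
    · ext a
      simp only [Set.mem_singleton_iff]
      rw [hfirst a]
      constructor
      · intro ha
        by_contra hne
        have := le_csSup (hBdd a) ha
        rw [← hIM a, h0 a hne] at this
        omega
      · rintro rfl; exact hi1
  · rintro ⟨⟨hne, hfl⟩, hel, _⟩
    have hw : wordWeight w i = 1 := hel
    refine ⟨?_, ?_, hw⟩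
    · have hi1 : 1 ∈ S i := (hfirst i).1 (by rw [hfl]; rfl)
      rw [hIM i]
      apply le_antisymm
      · exact csSup_le ⟨0, hS0 i⟩ (fun m hm => by have := hSb i m hm; omega)
      · exact le_csSup (hBdd i) hi1
    · intro j hj
      have hz : ∀ m ∈ S j, m = 0 := by
        intro m hm
        by_contra h
        have h1 : 1 ∈ S j := hdc j m 1 (Nat.one_le_iff_ne_zero.2 h) hm
        have : j ∈ firstLetters G (Trace.mk G w) := (hfirst j).2 h1
        rw [hfl] at this
        exact hj this
      rw [hIM j]
      exact Nat.le_zero.mp (csSup_le ⟨0, hS0 j⟩ fun m hm => (hz m hm).le)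
end
end

section
/- The k-chromatic polynomial of a graph G satisfies π^G_k(q) = (1/k!) · π^{G(k)}_1(q), where G(k) is the join of G with respect to k: replace vertex j by a clique of size k_j, joining all vertices of the r-th and s-th cliques whenever {r,s} is an edge of G, and k! = Π_i k_i!. -/
/-
A proper colouring of `G(k)` is injective on each clique, so it assigns to vertex `i` of `G`
a set of exactly `kᵢ` colours, and the colour sets of adjacent vertices are disjoint: this is a
`k`-multicolouring `τ` of `G`. Conversely, the proper colourings of `G(k)` inducing a given `τ`
correspond to the choices of a bijection `Fin kᵢ ≃ τ i` for every `i`, of which there are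
`∏ᵢ kᵢ! = k!`.
-/

open scoped Classical
noncomputable section

/-- The number of proper vertex `k`-multicolorings of `G` with colors from `{1, …, q}`:
each vertex `i` receives a set of exactly `k i` colors, and adjacent vertices receive
disjoint color sets.  As a function of `q` this is the `k`-chromatic polynomial
`π^G_k(q)`. -/
def properMulticolorings {I : Type*} (G : SimpleGraph I) (k : I →₀ ℕ) (q : ℕ) : ℕ :=
  Nat.card {τ : I → Finset (Fin q) //
    (∀ i, (τ i).card = k i) ∧ ∀ i j, G.Adj i j → Disjoint (τ i) (τ j)}

/-- The join `G(k)` of `G` with respect to `k`: each vertex `j` is replaced by a clique of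
size `k j`, and all vertices of the `r`-th and `s`-th cliques are joined whenever
`{r, s}` is an edge of `G`. -/
def joinGraph {I : Type*} (G : SimpleGraph I) (k : I →₀ ℕ) :
    SimpleGraph (Σ i : k.support, Fin (k i.1)) where
  Adj x y := (x.1.1 = y.1.1 ∧ x ≠ y) ∨ G.Adj x.1.1 y.1.1
  symm := by
    constructor
    rintro x y (⟨h1, h2⟩ | h)
    · exact Or.inl ⟨h1.symm, h2.symm⟩
    · exact Or.inr h.symm
  loopless := by
    constructor
    rintro x (⟨_, h⟩ | h)
    · exact h rfl
    · exact G.loopless.irrefl _ h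

/-- The number of proper vertex colorings of `H` with `q` colors (the ordinary chromatic
polynomial `π^H_1(q)`). -/
def properColorings {V : Type*} (H : SimpleGraph V) (q : ℕ) : ℕ :=
  Nat.card {c : V → Fin q // ∀ v w, H.Adj v w → c v ≠ c w}

open Finset Function

section
variable {I : Type*} {G : SimpleGraph I} {k : I →₀ ℕ} {q : ℕ}

abbrev Multicoloring (G : SimpleGraph I) (k : I →₀ ℕ) (q : ℕ) :=
  {τ : I → Finset (Fin q) //
    (∀ i, (τ i).card = k i) ∧ ∀ i j, G.Adj i j → Disjoint (τ i) (τ j)}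

abbrev ProperColoring {V : Type*} (H : SimpleGraph V) (q : ℕ) :=
  {c : V → Fin q // ∀ v w, H.Adj v w → c v ≠ c w}

namespace Multicoloring

theorem eq_empty_of_notMem_support (τ : Multicoloring G k q) {i : I} (hi : i ∉ k.support) :
    τ.1 i = ∅ :=
  card_eq_zero.mp (by rw [τ.2.1 i, Finsupp.notMem_support_iff.mp hi])

instance : Finite (Multicoloring G k q) := by
  refine Finite.of_injective (fun τ : Multicoloring G k q => fun i : k.support => τ.1 i) ?_
  intro τ σ h
  ext1; funext i
  by_cases hi : i ∈ k.support
  · exact congrFun h ⟨i, hi⟩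
  · rw [τ.eq_empty_of_notMem_support hi, σ.eq_empty_of_notMem_support hi]

abbrev Labelling (τ : Multicoloring G k q) := ∀ i : k.support, Fin (k i) ≃ τ.1 i

theorem card_labelling (τ : Multicoloring G k q) :
    Nat.card τ.Labelling = k.prod fun _ n => n.factorial := by
  rw [Nat.card_pi, Finsupp.prod, ← prod_coe_sort k.support fun i => (k i).factorial]
  refine prod_congr rfl fun i _ => ?_
  have e : Fin (k i) ≃ τ.1 i := Fintype.equivOfCardEq (by simp [τ.2.1])
  rw [Nat.card_eq_fintype_card, Fintype.card_equiv e, Fintype.card_fin]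

def toJoinColoring (p : Σ τ : Multicoloring G k q, τ.Labelling) :
    ProperColoring (joinGraph G k) q :=
  ⟨fun v => p.2 v.1 v.2, by
    rintro ⟨i, a⟩ ⟨j, b⟩ hadj hab
    replace hab : (p.2 i a : Fin q) = p.2 j b := hab
    rcases hadj with ⟨hij, hne⟩ | hG
    · obtain rfl : i = j := Subtype.ext hij
      exact hne (congrArg _ ((p.2 i).injective (Subtype.ext hab)))
    · exact disjoint_left.mp (p.1.2.2 _ _ hG) (p.2 i a).2 (hab ▸ (p.2 j b).2)⟩

end Multicoloring

namespace ProperColoring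

variable (c : ProperColoring (joinGraph G k) q)

theorem eq_of_color_eq {v w : Σ i : k.support, Fin (k i)} (hvw : v.1 = w.1)
    (hc : c.1 v = c.1 w) : v = w := by
  by_contra hne
  exact c.2 v w (Or.inl ⟨congrArg Subtype.val hvw, hne⟩) hc

def cliqueColorSet (i : I) : Finset (Fin q) :=
  univ.filter fun x => ∃ v : Σ j : k.support, Fin (k j), v.1.1 = i ∧ c.1 v = x

theorem mem_cliqueColorSet {i : I} {x : Fin q} :
    x ∈ c.cliqueColorSet i ↔ ∃ v : Σ j : k.support, Fin (k j), v.1.1 = i ∧ c.1 v = x := by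
  simp only [cliqueColorSet, mem_filter, mem_univ, true_and]

def cliqueColorSetEquiv (i : k.support) : Fin (k i) ≃ c.cliqueColorSet i :=
  Equiv.ofBijective
    (fun a => ⟨c.1 ⟨i, a⟩, c.mem_cliqueColorSet.2 ⟨⟨i, a⟩, rfl, rfl⟩⟩) <| by
    refine ⟨fun a b hab => ?_, ?_⟩
    · have := c.eq_of_color_eq (v := ⟨i, a⟩) (w := ⟨i, b⟩) rfl (congrArg Subtype.val hab)
      simpa using this
    · rintro ⟨x, hx⟩
      obtain ⟨⟨j, a⟩, hji, rfl⟩ := c.mem_cliqueColorSet.1 hx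
      obtain rfl : j = i := Subtype.ext hji
      exact ⟨a, rfl⟩

theorem card_cliqueColorSet (i : I) : (c.cliqueColorSet i).card = k i := by
  by_cases hi : i ∈ k.support
  · simpa using (Fintype.card_congr (c.cliqueColorSetEquiv ⟨i, hi⟩)).symm
  · rw [Finsupp.notMem_support_iff.mp hi, card_eq_zero, eq_empty_iff_forall_notMem]
    rintro x hx
    obtain ⟨v, rfl, -⟩ := c.mem_cliqueColorSet.1 hx
    exact hi v.1.2

def cliqueColors : Multicoloring G k q :=
  ⟨c.cliqueColorSet, c.card_cliqueColorSet, fun i j hij => by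
    refine disjoint_left.mpr fun x hxi hxj => ?_
    obtain ⟨v, rfl, rfl⟩ := c.mem_cliqueColorSet.1 hxi
    obtain ⟨w, rfl, hw⟩ := c.mem_cliqueColorSet.1 hxj
    exact c.2 v w (Or.inr hij) hw.symm⟩

end ProperColoring

namespace Multicoloring

open ProperColoring

theorem cliqueColors_toJoinColoring (p : Σ τ : Multicoloring G k q, τ.Labelling) :
    (toJoinColoring p).cliqueColors = p.1 := by
  ext i x
  simp only [cliqueColors, mem_cliqueColorSet, toJoinColoring]
  constructor
  · rintro ⟨⟨j, a⟩, rfl, rfl⟩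
    exact (p.2 j a).2
  · intro hx
    have hi : i ∈ k.support := by
      by_contra hi
      simp [p.1.eq_empty_of_notMem_support hi] at hx
    exact ⟨⟨⟨i, hi⟩, (p.2 ⟨i, hi⟩).symm ⟨x, hx⟩⟩, rfl, by simp⟩

theorem toJoinColoring_bijective :
    Bijective (toJoinColoring : (Σ τ : Multicoloring G k q, τ.Labelling) → _) := by
  refine ⟨fun p p' h => ?_, fun c => ⟨⟨c.cliqueColors, c.cliqueColorSetEquiv⟩, rfl⟩⟩
  obtain ⟨τ, e⟩ := p
  obtain ⟨τ', e'⟩ := p'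
  obtain rfl : τ = τ' := by
    simpa only [cliqueColors_toJoinColoring] using congrArg cliqueColors h
  obtain rfl : e = e' := funext fun i => Equiv.ext fun a =>
    Subtype.ext (congrFun (congrArg Subtype.val h) ⟨i, a⟩)
  rfl

end Multicoloring

end

/-- `π^G_k(q) = (1/k!) · π^{G(k)}_1(q)`, where `G(k)` is the join of `G` with respect to
`k` and `k! = ∏ᵢ kᵢ!`; stated without division as `k! · π^G_k(q) = π^{G(k)}_1(q)`. -/
theorem multichromatic_eq_chromatic_of_join {I : Type*} (G : SimpleGraph I)
    (k : I →₀ ℕ) (q : ℕ) :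
    (k.prod fun _ n => n.factorial) * properMulticolorings G k q =
      properColorings (joinGraph G k) q := by
  have := Fintype.ofFinite (Multicoloring G k q)
  calc (k.prod fun _ n => n.factorial) * properMulticolorings G k q
      = ∑ τ : Multicoloring G k q, Nat.card τ.Labelling := by
        rw [sum_congr rfl fun τ _ => Multicoloring.card_labelling τ, sum_const, card_univ,
          smul_eq_mul, mul_comm, properMulticolorings, Nat.card_eq_fintype_card]
    _ = Nat.card (Σ τ : Multicoloring G k q, τ.Labelling) := Nat.card_sigma.symm
    _ = properColorings (joinGraph G k) q :=
        Nat.card_eq_of_bijective _ Multicoloring.toJoinColoring_bijective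
end
end
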